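/- For any n×n complex matrix A and any α with 0 ≤ α ≤ 1, the block matrix [[|A|^{2α}, A*], [A, |A*|^{2(1-α)}]] is positive semidefinite. -/

import Mathlib

open Matrix
open scoped ComplexOrder

/-- The `j`-th largest singular value of a square complex matrix (`j : Fin m`, zero-indexed,
so `sv A 0` is the largest singular value). It is defined as the square root of the `j`-th
largest eigenvalue of `Aᴴ * A`. -/
noncomputable def sv {m : ℕ} (A : Matrix (Fin m) (Fin m) ℂ) (j : Fin m) : ℝ :=
  Real.sqrt ((Matrix.isHermitian_conjTranspose_mul_self A).eigenvalues
    (Tuple.sort ((Matrix.isHermitian_conjTranspose_mul_self A).eigenvalues) j.rev))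

/-- The absolute value `|A| = (Aᴴ A)^{1/2}` of a square complex matrix. -/
noncomputable def matAbs {m : ℕ} (A : Matrix (Fin m) (Fin m) ℂ) : Matrix (Fin m) (Fin m) ℂ :=
  (Matrix.posSemidef_conjTranspose_mul_self A).1.cfc Real.sqrt

/-- The `2n × 2n` block matrix `[[A, B], [C, D]]`, reindexed by `Fin (n + n)`. -/
noncomputable def blk {n : ℕ} (A B C D : Matrix (Fin n) (Fin n) ℂ) :
    Matrix (Fin (n + n)) (Fin (n + n)) ℂ :=
  Matrix.reindex finSumFinEquiv finSumFinEquiv (Matrix.fromBlocks A B C D)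

/-- `f(P)` for a Hermitian matrix `P`, via the spectral functional calculus. -/
noncomputable def herCfc {m : ℕ} {P : Matrix (Fin m) (Fin m) ℂ} (hP : P.IsHermitian)
    (f : ℝ → ℝ) : Matrix (Fin m) (Fin m) ℂ :=
  hP.cfc f

/-- `|A| ^ r` (real power of the absolute value), via the functional calculus. -/
noncomputable def matAbsPow {m : ℕ} (A : Matrix (Fin m) (Fin m) ℂ) (r : ℝ) :
    Matrix (Fin m) (Fin m) ℂ :=
  herCfc (P := (Matrix.posSemidef_conjTranspose_mul_self A).1.cfc Real.sqrt)
    (by rw [← Matrix.IsHermitian.cfc_eq]; exact cfc_predicate _ _) (fun t => t ^ r)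

/-- `f(|A|)`, via the functional calculus. -/
noncomputable def matAbsCfc {m : ℕ} (A : Matrix (Fin m) (Fin m) ℂ) (f : ℝ → ℝ) :
    Matrix (Fin m) (Fin m) ℂ :=
  herCfc (P := (Matrix.posSemidef_conjTranspose_mul_self A).1.cfc Real.sqrt)
    (by rw [← Matrix.IsHermitian.cfc_eq]; exact cfc_predicate _ _) f

/-- The operator norm: the largest singular value. -/
noncomputable def opNorm {m : ℕ} (A : Matrix (Fin m) (Fin m) ℂ) : ℝ :=
  ⨆ j, sv A j

/-!
Let `V = A |A|⁺` be the partial isometry of the polar decomposition. Since `A` intertwines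
`Aᴴ A` with `A Aᴴ`, it intertwines every function of them, so `A = |Aᴴ|^(1-α) V |A|^α`.
Hence, with `D = diag(|A|^α, |Aᴴ|^(1-α))`, the block matrix is `Dᴴ [[1, Vᴴ], [V, 1]] D`, and
`[[1, Vᴴ], [V, 1]]` is positive semidefinite by the Schur complement criterion, because
`V Vᴴ` is a projection, so `1 - V Vᴴ ≥ 0`.
-/

open Polynomial in
theorem SemiconjBy.aeval {R A : Type*} [CommSemiring R] [Semiring A] [Algebra R A] {x a b : A}
    (h : SemiconjBy x a b) (q : R[X]) : SemiconjBy x (aeval a q) (aeval b q) := by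
  induction q using Polynomial.induction_on' with
  | add p q hp hq => simpa only [map_add] using hp.add_right hq
  | monomial k r =>
    simpa only [aeval_monomial] using
      SemiconjBy.mul_right (Algebra.commute_algebraMap_right r x) (h.pow_right k)

/-- On finite spectra `cfc f` agrees with a Lagrange interpolation polynomial of `f`. -/
theorem SemiconjBy.cfc_of_finite_spectrum {A : Type*} [Ring A] [StarRing A] [TopologicalSpace A]
    [Algebra ℝ A] [ContinuousFunctionalCalculus ℝ A IsSelfAdjoint] {x a b : A}
    (h : SemiconjBy x a b) (ha : IsSelfAdjoint a) (hb : IsSelfAdjoint b)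
    (ha' : (spectrum ℝ a).Finite) (hb' : (spectrum ℝ b).Finite) (f : ℝ → ℝ) :
    SemiconjBy x (cfc f a) (cfc f b) := by
  have hs := ha'.union hb'
  set q := Lagrange.interpolate hs.toFinset id f
  have hq : ∀ t ∈ spectrum ℝ a ∪ spectrum ℝ b, f t = q.eval t := fun t ht =>
    (Lagrange.eval_interpolate_at_node f (Set.injOn_id _) (hs.mem_toFinset.2 ht)).symm
  rw [cfc_congr fun t ht => hq t (Or.inl ht), cfc_congr fun t ht => hq t (Or.inr ht),
    cfc_polynomial q a, cfc_polynomial q b]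
  exact h.aeval q

namespace Matrix

variable {𝕜 : Type*} [RCLike 𝕜] {n : Type*} [Fintype n] [DecidableEq n]

lemma continuousOn_spectrum_real (f : ℝ → ℝ) (A : Matrix n n 𝕜) :
    ContinuousOn f (spectrum ℝ A) :=
  A.finite_real_spectrum.continuousOn f

lemma mul_cfc_conjTranspose_mul_self (A : Matrix n n 𝕜) (f : ℝ → ℝ) :
    A * cfc f (Aᴴ * A) = cfc f (A * Aᴴ) * A :=
  SemiconjBy.cfc_of_finite_spectrum (by simp only [SemiconjBy, Matrix.mul_assoc])
    (isHermitian_conjTranspose_mul_self A) (isHermitian_mul_conjTranspose_self A)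
    finite_real_spectrum finite_real_spectrum f

open scoped MatrixOrder in
lemma mul_cfc_conjTranspose_mul_self_eq_self (A : Matrix n n 𝕜) {f : ℝ → ℝ}
    (hf : ∀ t > 0, f t = 1) : A * cfc f (Aᴴ * A) = A := by
  have hA : IsSelfAdjoint (Aᴴ * A) := isHermitian_conjTranspose_mul_self A
  set H := cfc (fun t => 1 - f t) (Aᴴ * A)
  have hH : Hᴴ = H := (cfc_predicate _ _ : IsSelfAdjoint H).star_eq
  have hAH : A * H = 0 := by
    rw [← conjTranspose_mul_self_eq_zero]
    calc (A * H)ᴴ * (A * H) = H * (Aᴴ * A) * H := by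
          rw [conjTranspose_mul, hH]; simp only [Matrix.mul_assoc]
      _ = cfc (fun t => (1 - f t) * t * (1 - f t)) (Aᴴ * A) := by
          rw [cfc_mul _ _ _ (continuousOn_spectrum_real _ _) (continuousOn_spectrum_real _ _),
            cfc_mul _ _ _ (continuousOn_spectrum_real _ _) (continuousOn_spectrum_real _ _),
            cfc_id' ℝ (Aᴴ * A)]
      _ = 0 := by
          refine (cfc_congr fun t ht => ?_).trans (cfc_const_zero ℝ _)
          rcases (spectrum_nonneg_of_nonneg (posSemidef_conjTranspose_mul_self A).nonneg
            ht).eq_or_lt with rfl | ht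
          · simp
          · simp [hf t ht]
  calc A * cfc f (Aᴴ * A) = A * (cfc f (Aᴴ * A) + H) := by rw [Matrix.mul_add, hAH, add_zero]
    _ = A := by
      rw [← cfc_add _ _ _ (continuousOn_spectrum_real _ _) (continuousOn_spectrum_real _ _)]
      simp only [add_sub_cancel, cfc_const_one ℝ (Aᴴ * A), Matrix.mul_one]

lemma posSemidef_fromBlocks_one {m : Type*} [Fintype m] [DecidableEq m] (K : Matrix n m 𝕜)
    (hK : (1 - K * Kᴴ).PosSemidef) : (fromBlocks 1 Kᴴ K 1).PosSemidef := by
  have : Invertible (1 : Matrix m m 𝕜) := invertibleOne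
  simpa using (PosDef.fromBlocks₁₁ Kᴴ 1 PosDef.one).2 (by simpa using hK)

lemma posSemidef_fromBlocks_conjTranspose_mul {m p q : Type*} [Fintype m] [DecidableEq m]
    [Fintype p] [Fintype q] (X : Matrix m p 𝕜) (Y : Matrix n q 𝕜) (K : Matrix n m 𝕜)
    (hK : (1 - K * Kᴴ).PosSemidef) :
    (fromBlocks (Xᴴ * X) (Xᴴ * Kᴴ * Y) (Yᴴ * K * X) (Yᴴ * Y)).PosSemidef := by
  convert (posSemidef_fromBlocks_one K hK).conjTranspose_mul_mul_same (fromBlocks X 0 0 Y) using 1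
  simp [fromBlocks_conjTranspose, fromBlocks_multiply, Matrix.mul_assoc]

end Matrix

section AbsPow

variable {m : ℕ} (A : Matrix (Fin m) (Fin m) ℂ)

lemma matAbsPow_eq_cfc (r : ℝ) : matAbsPow A r = cfc (fun t => √t ^ r) (Aᴴ * A) := by
  have hA : IsSelfAdjoint (Aᴴ * A) := isHermitian_conjTranspose_mul_self A
  rw [matAbsPow, herCfc, ← IsHermitian.cfc_eq, ← IsHermitian.cfc_eq]
  exact (cfc_comp (· ^ r) Real.sqrt (Aᴴ * A)
    (hg := (finite_real_spectrum.image _).continuousOn _)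
    (hf := continuousOn_spectrum_real _ _)).symm

lemma isHermitian_matAbsPow (r : ℝ) : (matAbsPow A r).IsHermitian := by
  rw [matAbsPow_eq_cfc]
  exact cfc_predicate _ _

lemma matAbsPow_two_mul (r : ℝ) : matAbsPow A (2 * r) = matAbsPow A r * matAbsPow A r := by
  rw [matAbsPow_eq_cfc, matAbsPow_eq_cfc,
    ← cfc_mul _ _ _ (continuousOn_spectrum_real _ _) (continuousOn_spectrum_real _ _)]
  refine cfc_congr fun t _ => ?_
  rw [mul_comm, Real.rpow_mul (Real.sqrt_nonneg t), Real.rpow_two, sq]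

/-- The partial isometry `V = A |A|⁺` of the polar decomposition `A = V |A|`; the
Moore–Penrose inverse `|A|⁺` comes from the convention `0⁻¹ = 0`. -/
noncomputable def polarFactor : Matrix (Fin m) (Fin m) ℂ :=
  A * cfc (fun t => (√t)⁻¹) (Aᴴ * A)

open scoped MatrixOrder in
lemma posSemidef_one_sub_polarFactor_mul_conjTranspose :
    (1 - polarFactor A * (polarFactor A)ᴴ).PosSemidef := by
  have hAA : IsSelfAdjoint (A * Aᴴ) := isHermitian_mul_conjTranspose_self A
  have hG : (cfc (fun t => (√t)⁻¹) (Aᴴ * A))ᴴ = cfc (fun t => (√t)⁻¹) (Aᴴ * A) :=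
    (cfc_predicate _ _ : IsSelfAdjoint _).star_eq
  have hVV : polarFactor A * (polarFactor A)ᴴ =
      cfc (fun t => (√t)⁻¹ * (√t)⁻¹ * t) (A * Aᴴ) := by
    calc polarFactor A * (polarFactor A)ᴴ
      _ = A * cfc (fun t => (√t)⁻¹ * (√t)⁻¹) (Aᴴ * A) * Aᴴ := by
          rw [polarFactor, conjTranspose_mul, hG, cfc_mul _ _ _ (continuousOn_spectrum_real _ _)
            (continuousOn_spectrum_real _ _)]
          simp only [Matrix.mul_assoc]
      _ = cfc (fun t => (√t)⁻¹ * (√t)⁻¹) (A * Aᴴ) * (A * Aᴴ) := by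
          rw [mul_cfc_conjTranspose_mul_self, Matrix.mul_assoc]
      _ = _ := by
          rw [cfc_mul _ (fun t => t) _ (continuousOn_spectrum_real _ _)
            (continuousOn_spectrum_real _ _), cfc_id' ℝ (A * Aᴴ)]
  rw [hVV, ← le_iff]
  refine cfc_le_one _ _ fun t _ => ?_
  rcases le_or_gt t 0 with ht | ht
  · simp [Real.sqrt_eq_zero'.2 ht]
  · rw [← mul_inv, Real.mul_self_sqrt ht.le, inv_mul_cancel₀ ht.ne']

lemma matAbsPow_conjTranspose_mul_polarFactor_mul_matAbsPow {r s : ℝ} (h : s + r = 1) :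
    matAbsPow Aᴴ s * polarFactor A * matAbsPow A r = A := by
  rw [matAbsPow_eq_cfc, matAbsPow_eq_cfc, conjTranspose_conjTranspose, polarFactor,
    ← Matrix.mul_assoc, ← mul_cfc_conjTranspose_mul_self, Matrix.mul_assoc, Matrix.mul_assoc,
    ← cfc_mul _ _ _ (continuousOn_spectrum_real _ _) (continuousOn_spectrum_real _ _),
    ← cfc_mul _ _ _ (continuousOn_spectrum_real _ _) (continuousOn_spectrum_real _ _)]
  refine mul_cfc_conjTranspose_mul_self_eq_self A fun t ht => ?_
  have hst : 0 < √t := Real.sqrt_pos.2 ht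
  rw [mul_left_comm, ← Real.rpow_add hst, h, Real.rpow_one, inv_mul_cancel₀ hst.ne']

end AbsPow

theorem abs_power_block_posSemidef_general {n : ℕ} (A : Matrix (Fin n) (Fin n) ℂ)
    (α : ℝ) :
    (blk (matAbsPow A (2 * α)) Aᴴ A (matAbsPow Aᴴ (2 * (1 - α)))).PosSemidef := by
  set P := matAbsPow A α
  set Q := matAbsPow Aᴴ (1 - α)
  have hP : Pᴴ = P := (isHermitian_matAbsPow A α).eq
  have hQ : Qᴴ = Q := (isHermitian_matAbsPow Aᴴ (1 - α)).eq
  have hQKP : Qᴴ * polarFactor A * P = A := by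
    rw [hQ]
    exact matAbsPow_conjTranspose_mul_polarFactor_mul_matAbsPow A (by ring)
  have hPKQ : Pᴴ * (polarFactor A)ᴴ * Q = Aᴴ := by
    simpa only [conjTranspose_mul, conjTranspose_conjTranspose, Matrix.mul_assoc]
      using congrArg conjTranspose hQKP
  have h := posSemidef_fromBlocks_conjTranspose_mul P Q _
    (posSemidef_one_sub_polarFactor_mul_conjTranspose A)
  rw [hQKP, hPKQ, hP, hQ] at h
  rwa [blk, reindex_apply, posSemidef_submatrix_equiv, matAbsPow_two_mul, matAbsPow_two_mul]

theorem abs_power_block_posSemidef {n : ℕ} (A : Matrix (Fin n) (Fin n) ℂ)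
    (α : ℝ) (hα0 : 0 ≤ α) (hα1 : α ≤ 1) :
    (blk (matAbsPow A (2 * α)) Aᴴ A (matAbsPow Aᴴ (2 * (1 - α)))).PosSemidef :=
  abs_power_block_posSemidef_general A α
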